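/- Let x_l be a single mode with x̂_l(η) = B_l(η) e^{-i2πθ_l(η)}, B_l ∈ C¹, |B_l'| ≤ ε₁, θ_l ∈ C³, |θ_l'''| ≤ ε₂. Define the residual Q_{m,l} := ∂_η D_{x_l}^{ξ^m g}(t,η,γ) + i2πθ_l'(η) D_{x_l}^{ξ^m g}(t,η,γ) + i2πθ_l''(η) D_{x_l}^{ξ^{m+1} g}(t,η,γ). Then |Q_{m,l}| ≤ ε₁ I_m + ε₁ ε₂ π I_{m+3} + ε₂ π B_l(η) I_{m+2}. -/

import Mathlib

open Real MeasureTheory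

noncomputable def cexp (x : ℝ) : ℂ := Complex.exp (Complex.I * (x : ℂ))

/-- Frequency-domain chirplet transform with window `g`, applied to `xhat`. -/
noncomputable def fct (xhat g : ℝ → ℂ) (t η γ : ℝ) : ℂ :=
  ∫ ξ : ℝ, xhat (ξ + η) * g ξ * cexp (2 * π * ξ * t) * cexp (π * γ * ξ ^ 2)

/-- Window `ξ ↦ ξ^m g(ξ)`. -/
noncomputable def wm (g : ℝ → ℂ) (m : ℕ) : ℝ → ℂ := fun ξ => (ξ : ℂ) ^ m * g ξ

/-- `I_m = ∫ |ξ^m g(ξ)| dξ`. -/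
noncomputable def Imom (g : ℝ → ℂ) (m : ℕ) : ℝ := ∫ ξ : ℝ, ‖wm g m ξ‖

lemma norm_cexp (x : ℝ) : ‖cexp x‖ = 1 := by
  simp [cexp, Complex.norm_exp]

lemma cexp_cont {f : ℝ → ℝ} (hf : Continuous f) : Continuous fun ξ => cexp (f ξ) :=
  Complex.continuous_exp.comp (continuous_const.mul (Complex.continuous_ofReal.comp hf))

lemma lip_of_deriv (f : ℝ → ℝ) (hf : Differentiable ℝ f) {C : ℝ}
    (hC : ∀ x, |deriv f x| ≤ C) (a x : ℝ) : |f x - f a| ≤ C * |x - a| := by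
  have := Convex.norm_image_sub_le_of_norm_deriv_le (f := f) (s := Set.univ)
    (fun y _ => hf y) (fun y _ => by simpa using hC y) convex_univ (Set.mem_univ a)
    (Set.mem_univ x)
  simpa [Real.norm_eq_abs] using this

lemma taylor2 (f : ℝ → ℝ) (hf : ContDiff ℝ 2 f) {C : ℝ}
    (hC : ∀ x, |deriv (deriv f) x| ≤ C) (a x : ℝ) :
    |f x - f a - deriv f a * (x - a)| ≤ C / 2 * (x - a) ^ 2 := by
  have hf1 : Differentiable ℝ f := hf.differentiable (by norm_num)
  have hfd : ContDiff ℝ 1 (deriv f) := ((contDiff_succ_iff_deriv (n := 1)).mp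
    (by exact_mod_cast hf)).2.2
  have hfdc : Continuous (deriv f) := hfd.continuous
  have hlip : ∀ u, |deriv f u - deriv f a| ≤ C * |u - a| :=
    fun u => lip_of_deriv (deriv f) (hfd.differentiable (by norm_num)) hC a u
  have key : f x - f a = ∫ u in a..x, deriv f u :=
    (intervalIntegral.integral_deriv_eq_sub (fun u _ => hf1 u)
      (hfdc.intervalIntegrable a x)).symm
  have key2 : f x - f a - deriv f a * (x - a)
      = ∫ u in a..x, (deriv f u - deriv f a) := by
    rw [intervalIntegral.integral_sub (hfdc.intervalIntegrable a x)
      (intervalIntegrable_const), intervalIntegral.integral_const, ← key]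
    simp [smul_eq_mul]; ring
  have hcompute : ∀ c d : ℝ, (∫ u in c..d, C * (u - a)) = C/2 * ((d-a)^2 - (c-a)^2) := by
    intro c d
    rw [intervalIntegral.integral_const_mul]
    have : (∫ u in c..d, (u - a)) = ∫ v in (c-a)..(d-a), v := by
      simpa using (intervalIntegral.integral_comp_sub_right (a := c) (b := d) (fun v => v) a)
    rw [this, integral_id]; ring
  rcases le_total a x with hax | hax
  · rw [key2]
    calc |∫ u in a..x, (deriv f u - deriv f a)|
        ≤ ∫ u in a..x, |deriv f u - deriv f a| := by
          simpa [Real.norm_eq_abs] using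
            intervalIntegral.norm_integral_le_integral_norm (f := fun u => deriv f u - deriv f a)
              (a := a) (b := x) (μ := volume) hax
      _ ≤ ∫ u in a..x, C * (u - a) := by
          apply intervalIntegral.integral_mono_on hax
          · exact ((hfdc.sub continuous_const).abs.intervalIntegrable a x)
          · exact (Continuous.intervalIntegrable (by continuity) a x)
          · intro u hu
            have := hlip u
            rw [abs_of_nonneg (by linarith [hu.1] : (0:ℝ) ≤ u - a)] at this
            exact this
      _ = C/2 * ((x-a)^2 - (a-a)^2) := hcompute a x
      _ ≤ C/2 * (x-a)^2 := by ring_nf; rfl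
  · rw [key2, intervalIntegral.integral_symm, abs_neg]
    calc |∫ u in x..a, (deriv f u - deriv f a)|
        ≤ ∫ u in x..a, |deriv f u - deriv f a| := by
          simpa [Real.norm_eq_abs] using
            intervalIntegral.norm_integral_le_integral_norm (f := fun u => deriv f u - deriv f a)
              (a := x) (b := a) (μ := volume) hax
      _ ≤ ∫ u in x..a, C * (a - u) := by
          apply intervalIntegral.integral_mono_on hax
          · exact ((hfdc.sub continuous_const).abs.intervalIntegrable x a)
          · exact (Continuous.intervalIntegrable (by continuity) x a)
          · intro u hu
            have := hlip u
            rw [abs_of_nonpos (by linarith [hu.2] : u - a ≤ 0)] at this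
            calc |deriv f u - deriv f a| ≤ C * -(u - a) := this
              _ = C * (a - u) := by ring
      _ = C/2 * (x-a)^2 := by
          have : (∫ u in x..a, C * (a - u)) = -∫ u in x..a, C * (u - a) := by
            rw [← intervalIntegral.integral_neg]; congr 1; ext u; ring
          rw [this, hcompute x a]; ring

lemma wm_succ (g : ℝ → ℂ) (n : ℕ) (ξ : ℝ) : wm g (n+1) ξ = (ξ:ℂ) * wm g n ξ := by
  simp only [wm, pow_succ]; ring

lemma norm_wm_add (g : ℝ → ℂ) (n k : ℕ) (ξ : ℝ) :
    ‖wm g (n+k) ξ‖ = |ξ|^k * ‖wm g n ξ‖ := by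
  induction k with
  | zero => simp
  | succ k ih =>
    rw [show n + (k+1) = (n+k)+1 from rfl, wm_succ, norm_mul, ih, Complex.norm_real,
      Real.norm_eq_abs, pow_succ]
    ring


/-- Residual bound for a single mode: with `∂_η D` computed by differentiation
under the integral sign, `|Q_{m,l}| ≤ ε₁I_m + ε₁ε₂πI_{m+3} + ε₂πB_l(η)I_{m+2}`. -/
theorem residual_single_mode_bound (g : ℝ → ℂ) (B θ : ℝ → ℝ) (ε₁ ε₂ : ℝ) (m : ℕ)
    (hB : ContDiff ℝ 1 B) (hB1 : ∀ η : ℝ, |deriv B η| ≤ ε₁) (hBpos : ∀ η : ℝ, 0 < B η)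
    (hθ : ContDiff ℝ 3 θ) (hθ3 : ∀ η : ℝ, |iteratedDeriv 3 θ η| ≤ ε₂)
    (hint : ∀ n : ℕ, n ≤ m + 3 → Integrable (wm g n))
    (t η γ : ℝ)
    (xhat : ℝ → ℂ) (hxhat : xhat = fun u => (B u : ℂ) * cexp (-(2 * π * θ u)))
    (Q : ℂ)
    -- the residual `Q_{m,l} = ∂_η D^{ξ^m g} + i2πθ'(η)D^{ξ^m g} + i2πθ''(η)D^{ξ^{m+1}g}`,
    -- with `∂_η D^{ξ^m g}` obtained by differentiating under the integral sign
    (hQ : Q = (∫ ξ : ℝ, deriv xhat (ξ + η) * wm g m ξ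
                  * cexp (2 * π * ξ * t) * cexp (π * γ * ξ ^ 2))
        + Complex.I * ((2 * π * deriv θ η : ℝ) : ℂ) * fct xhat (wm g m) t η γ
        + Complex.I * ((2 * π * iteratedDeriv 2 θ η : ℝ) : ℂ) * fct xhat (wm g (m + 1)) t η γ) :
    ‖Q‖ ≤ ε₁ * Imom g m + ε₁ * ε₂ * π * Imom g (m + 3) + ε₂ * π * B η * Imom g (m + 2) := by
  subst hxhat
  set xh : ℝ → ℂ := fun u => (B u : ℂ) * cexp (-(2 * π * θ u)) with hxh
  have hε₁ : 0 ≤ ε₁ := le_trans (abs_nonneg _) (hB1 0)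
  have hε₂ : 0 ≤ ε₂ := le_trans (abs_nonneg _) (hθ3 0)
  have hπ : (0:ℝ) < π := Real.pi_pos
  have hBd : Differentiable ℝ B := hB.differentiable (by norm_num)
  have hθd : Differentiable ℝ θ := hθ.differentiable (by norm_num)
  have hθ'c : ContDiff ℝ 2 (deriv θ) :=
    ((contDiff_succ_iff_deriv (n := 2)).mp (by exact_mod_cast hθ)).2.2
  have hθ'd : Differentiable ℝ (deriv θ) := hθ'c.differentiable (by norm_num)
  have hid2 : iteratedDeriv 2 θ = deriv (deriv θ) := by
    rw [iteratedDeriv_succ, iteratedDeriv_one]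
  have hid3 : ∀ y : ℝ, |deriv (deriv (deriv θ)) y| ≤ ε₂ := by
    intro y
    have : iteratedDeriv 3 θ = deriv (deriv (deriv θ)) := by
      rw [iteratedDeriv_succ, hid2]
    rw [← this]; exact hθ3 y
  -- mean value bounds
  have hBle : ∀ ξ : ℝ, B (ξ + η) ≤ B η + ε₁ * |ξ| := by
    intro ξ
    have h := lip_of_deriv B hBd hB1 η (ξ + η)
    rw [add_sub_cancel_right] at h
    have := (abs_le.mp h).2
    linarith
  have hτ : ∀ ξ : ℝ, |deriv θ (ξ + η) - deriv θ η - iteratedDeriv 2 θ η * ξ|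
      ≤ ε₂ / 2 * |ξ| ^ 2 := by
    intro ξ
    have h := taylor2 (deriv θ) hθ'c hid3 η (ξ + η)
    rw [add_sub_cancel_right] at h
    rw [sq_abs, hid2]
    exact h
  -- derivative of xh
  have hxd : ∀ u : ℝ, HasDerivAt xh
      ((((deriv B u : ℝ) : ℂ) + (B u : ℂ) * (Complex.I * ((-(2 * π * deriv θ u) : ℝ) : ℂ)))
        * cexp (-(2 * π * θ u))) u := by
    intro u
    have hBu : HasDerivAt (fun u : ℝ => ((B u : ℝ) : ℂ)) ((deriv B u : ℝ) : ℂ) u :=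
      ((hBd u).hasDerivAt).ofReal_comp
    have hθu : HasDerivAt (fun u : ℝ => -(2 * π * θ u)) (-(2 * π * deriv θ u)) u :=
      (((hθd u).hasDerivAt.const_mul (2*π)).neg)
    have h3 : HasDerivAt (fun u : ℝ => cexp (-(2*π*θ u)))
        (cexp (-(2*π*θ u)) * (Complex.I * ((-(2 * π * deriv θ u) : ℝ) : ℂ))) u :=
      ((hθu.ofReal_comp).const_mul Complex.I).cexp
    have h4 := hBu.mul h3
    convert h4 using 1
    case e'_4 => rfl
    case e'_8 => rfl
    case e'_9 => ring
  have hderiv : ∀ u : ℝ, deriv xh u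
      = (((deriv B u : ℝ) : ℂ) + (B u : ℂ) * (Complex.I * ((-(2 * π * deriv θ u) : ℝ) : ℂ)))
        * cexp (-(2 * π * θ u)) := fun u => (hxd u).deriv
  -- norm facts
  have hnx : ∀ u : ℝ, ‖xh u‖ = B u := by
    intro u
    rw [hxh]
    simp only []
    rw [norm_mul, norm_cexp, Complex.norm_real, Real.norm_eq_abs, abs_of_pos (hBpos u), mul_one]
  have hnd : ∀ u : ℝ, ‖deriv xh u‖ ≤ ε₁ + 2*π*(|deriv θ u| * B u) := by
    intro u
    rw [hderiv u, norm_mul, norm_cexp, mul_one]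
    refine le_trans (norm_add_le _ _) ?_
    rw [Complex.norm_real, Real.norm_eq_abs, norm_mul, norm_mul, Complex.norm_I, one_mul,
      Complex.norm_real, Real.norm_eq_abs, Complex.norm_real, Real.norm_eq_abs]
    have h1 : |(-(2 * π * deriv θ u))| = 2*π*|deriv θ u| := by
      rw [abs_neg, abs_mul, abs_of_pos (by positivity : (0:ℝ) < 2*π)]
    rw [h1, abs_of_pos (hBpos u)]
    have := hB1 u
    nlinarith [abs_nonneg (deriv θ u), (hBpos u).le]
  -- continuity facts
  have hxc : Continuous xh := by
    rw [hxh]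
    exact (Complex.continuous_ofReal.comp hB.continuous).mul
      (cexp_cont ((continuous_const.mul hθ.continuous).neg))
  have hB'c : Continuous (deriv B) := hB.continuous_deriv le_rfl
  have hθ1c : Continuous (deriv θ) := hθ'c.continuous
  have hG : Continuous fun u : ℝ =>
      ((((deriv B u : ℝ) : ℂ) + (B u : ℂ) * (Complex.I * ((-(2 * π * deriv θ u) : ℝ) : ℂ)))
        * cexp (-(2 * π * θ u))) :=
    ((Complex.continuous_ofReal.comp hB'c).add
      ((Complex.continuous_ofReal.comp hB.continuous).mul
        (continuous_const.mul
          (Complex.continuous_ofReal.comp ((continuous_const.mul hθ1c).neg))))).mul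
      (cexp_cont ((continuous_const.mul hθ.continuous).neg))
  have hph1 : Continuous fun ξ : ℝ => cexp (2 * π * ξ * t) :=
    cexp_cont (by continuity)
  have hph2 : Continuous fun ξ : ℝ => cexp (π * γ * ξ ^ 2) :=
    cexp_cont (by continuity)
  have wInt : ∀ n : ℕ, n ≤ m + 3 → Integrable (fun ξ : ℝ => ‖wm g n ξ‖) :=
    fun n h => (hint n h).norm
  -- integrability of the fct-type integrands
  have hIf : ∀ n : ℕ, n + 1 ≤ m + 3 → Integrable (fun ξ : ℝ =>
      xh (ξ + η) * wm g n ξ * cexp (2 * π * ξ * t) * cexp (π * γ * ξ ^ 2)) := by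
    intro n hn
    apply Integrable.mono'
      (((wInt n (by omega)).const_mul (B η)).add ((wInt (n+1) hn).const_mul ε₁))
    · exact ((((hxc.comp (continuous_id.add continuous_const)).aestronglyMeasurable.mul
        (hint n (by omega)).1).mul hph1.aestronglyMeasurable).mul hph2.aestronglyMeasurable)
    · refine ae_of_all _ fun ξ => ?_
      simp only [Pi.add_apply]
      rw [norm_mul, norm_mul, norm_cexp, norm_cexp, mul_one, mul_one, norm_mul, hnx]
      calc B (ξ+η) * ‖wm g n ξ‖ ≤ (B η + ε₁*|ξ|) * ‖wm g n ξ‖ :=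
            mul_le_mul_of_nonneg_right (hBle ξ) (norm_nonneg _)
        _ = B η * ‖wm g n ξ‖ + ε₁ * ‖wm g (n+1) ξ‖ := by
            rw [norm_wm_add g n 1]; ring
  -- integrability of the derivative-type integrand
  have hIf1 : Integrable (fun ξ : ℝ =>
      deriv xh (ξ + η) * wm g m ξ * cexp (2 * π * ξ * t) * cexp (π * γ * ξ ^ 2)) := by
    have hrw : (fun ξ : ℝ => deriv xh (ξ + η) * wm g m ξ * cexp (2*π*ξ*t) * cexp (π*γ*ξ^2))
        = fun ξ : ℝ => (((((deriv B (ξ+η) : ℝ) : ℂ) + (B (ξ+η) : ℂ)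
            * (Complex.I * ((-(2*π*deriv θ (ξ+η)) : ℝ) : ℂ))) * cexp (-(2*π*θ (ξ+η))))
            * wm g m ξ * cexp (2*π*ξ*t) * cexp (π*γ*ξ^2)) := by
      funext ξ; rw [hderiv]
    rw [hrw]
    apply Integrable.mono'
      (((((wInt m (by omega)).const_mul (ε₁ + 2*π*(|deriv θ η| *B η))).add
        ((wInt (m+1) (by omega)).const_mul (2*π*(|deriv θ η| *ε₁ + |iteratedDeriv 2 θ η| *B η)))).add
        ((wInt (m+2) (by omega)).const_mul (2*π*(|iteratedDeriv 2 θ η| *ε₁ + ε₂/2*B η)))).add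
        ((wInt (m+3) (by omega)).const_mul (2*π*(ε₂/2*ε₁))))
    · exact ((((hG.comp (continuous_id.add continuous_const)).aestronglyMeasurable.mul
        (hint m (by omega)).1).mul hph1.aestronglyMeasurable).mul hph2.aestronglyMeasurable)
    · refine ae_of_all _ fun ξ => ?_
      simp only [Pi.add_apply]
      rw [norm_mul, norm_mul, norm_cexp, norm_cexp, mul_one, mul_one, norm_mul]
      have hq : |deriv θ (ξ+η)| ≤ |deriv θ η| + |iteratedDeriv 2 θ η| *|ξ| + ε₂/2*|ξ|^2 := by
        have h := hτ ξ
        have hsplit : deriv θ (ξ+η) = deriv θ η + iteratedDeriv 2 θ η * ξ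
            + (deriv θ (ξ+η) - deriv θ η - iteratedDeriv 2 θ η * ξ) := by ring
        rw [hsplit]
        refine le_trans (abs_add_le _ _) ?_
        have := abs_add_le (deriv θ η) (iteratedDeriv 2 θ η * ξ)
        rw [abs_mul] at this
        linarith
      have hqB : |deriv θ (ξ+η)| * B (ξ+η)
          ≤ (|deriv θ η| + |iteratedDeriv 2 θ η| *|ξ| + ε₂/2*|ξ|^2) * (B η + ε₁*|ξ|) :=
        mul_le_mul hq (hBle ξ) (hBpos _).le (by positivity)
      calc ‖(((deriv B (ξ+η) : ℝ) : ℂ) + (B (ξ+η) : ℂ)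
            * (Complex.I * ((-(2*π*deriv θ (ξ+η)) : ℝ) : ℂ))) * cexp (-(2*π*θ (ξ+η)))‖
            * ‖wm g m ξ‖
          ≤ (ε₁ + 2*π*(|deriv θ (ξ+η)| * B (ξ+η))) * ‖wm g m ξ‖ := by
            refine mul_le_mul_of_nonneg_right ?_ (norm_nonneg _)
            rw [← hderiv (ξ+η)]
            exact hnd (ξ+η)
        _ ≤ (ε₁ + 2*π*((|deriv θ η| + |iteratedDeriv 2 θ η| *|ξ| + ε₂/2*|ξ|^2)
              * (B η + ε₁*|ξ|))) * ‖wm g m ξ‖ := by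
            refine mul_le_mul_of_nonneg_right ?_ (norm_nonneg _)
            nlinarith [hqB]
        _ = (ε₁ + 2*π*(|deriv θ η| *B η)) * ‖wm g m ξ‖
            + 2*π*(|deriv θ η| *ε₁ + |iteratedDeriv 2 θ η| *B η) * ‖wm g (m+1) ξ‖
            + 2*π*(|iteratedDeriv 2 θ η| *ε₁ + ε₂/2*B η) * ‖wm g (m+2) ξ‖
            + 2*π*(ε₂/2*ε₁) * ‖wm g (m+3) ξ‖ := by
            rw [norm_wm_add g m 1, norm_wm_add g m 2, norm_wm_add g m 3]
            ring
  -- the combined integrand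
  set c₂ : ℂ := Complex.I * ((2 * π * deriv θ η : ℝ) : ℂ) with hc2
  set c₃ : ℂ := Complex.I * ((2 * π * iteratedDeriv 2 θ η : ℝ) : ℂ) with hc3
  set F : ℝ → ℂ := fun ξ =>
      deriv xh (ξ+η) * wm g m ξ * cexp (2*π*ξ*t) * cexp (π*γ*ξ^2)
      + c₂ * (xh (ξ+η) * wm g m ξ * cexp (2*π*ξ*t) * cexp (π*γ*ξ^2))
      + c₃ * (xh (ξ+η) * wm g (m+1) ξ * cexp (2*π*ξ*t) * cexp (π*γ*ξ^2)) with hFdef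
  have hIF : Integrable F :=
    (hIf1.add ((hIf m (by omega)).const_mul c₂)).add ((hIf (m+1) (by omega)).const_mul c₃)
  have hQF : Q = ∫ ξ : ℝ, F ξ := by
    have i2 : Integrable (fun ξ : ℝ =>
        c₂ * (xh (ξ+η) * wm g m ξ * cexp (2*π*ξ*t) * cexp (π*γ*ξ^2))) :=
      (hIf m (by omega)).const_mul c₂
    have i3 : Integrable (fun ξ : ℝ =>
        c₃ * (xh (ξ+η) * wm g (m+1) ξ * cexp (2*π*ξ*t) * cexp (π*γ*ξ^2))) :=
      (hIf (m+1) (by omega)).const_mul c₃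
    have i12 : Integrable (fun ξ : ℝ =>
        deriv xh (ξ+η) * wm g m ξ * cexp (2*π*ξ*t) * cexp (π*γ*ξ^2)
        + c₂ * (xh (ξ+η) * wm g m ξ * cexp (2*π*ξ*t) * cexp (π*γ*ξ^2))) := hIf1.add i2
    have e1 : (∫ ξ : ℝ, F ξ)
        = (∫ ξ : ℝ, (deriv xh (ξ+η) * wm g m ξ * cexp (2*π*ξ*t) * cexp (π*γ*ξ^2)
            + c₂ * (xh (ξ+η) * wm g m ξ * cexp (2*π*ξ*t) * cexp (π*γ*ξ^2))))
          + ∫ ξ : ℝ, c₃ * (xh (ξ+η) * wm g (m+1) ξ * cexp (2*π*ξ*t) * cexp (π*γ*ξ^2)) :=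
      integral_add i12 i3
    have e2 : (∫ ξ : ℝ, (deriv xh (ξ+η) * wm g m ξ * cexp (2*π*ξ*t) * cexp (π*γ*ξ^2)
            + c₂ * (xh (ξ+η) * wm g m ξ * cexp (2*π*ξ*t) * cexp (π*γ*ξ^2))))
        = (∫ ξ : ℝ, deriv xh (ξ+η) * wm g m ξ * cexp (2*π*ξ*t) * cexp (π*γ*ξ^2))
          + ∫ ξ : ℝ, c₂ * (xh (ξ+η) * wm g m ξ * cexp (2*π*ξ*t) * cexp (π*γ*ξ^2)) :=
      integral_add hIf1 i2
    rw [hQ, e1, e2, integral_const_mul, integral_const_mul]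
    simp only [fct]
  have hbound : ∀ ξ : ℝ, ‖F ξ‖ ≤ ε₁ * ‖wm g m ξ‖ + ε₁*ε₂*π * ‖wm g (m+3) ξ‖
      + ε₂*π*B η * ‖wm g (m+2) ξ‖ := by
    intro ξ
    have hDc : F ξ = (((deriv B (ξ+η) : ℝ) : ℂ) + Complex.I *
        (((2*π*((deriv θ η + iteratedDeriv 2 θ η * ξ - deriv θ (ξ+η)) * B (ξ+η))) : ℝ) : ℂ))
        * cexp (-(2*π*θ (ξ+η))) * wm g m ξ * cexp (2*π*ξ*t) * cexp (π*γ*ξ^2) := by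
      rw [hFdef]
      simp only []
      rw [hderiv (ξ+η), wm_succ, hc2, hc3, hxh]
      simp only []
      push_cast
      ring
    rw [hDc, norm_mul, norm_mul, norm_mul, norm_mul, norm_cexp, norm_cexp, norm_cexp,
      mul_one, mul_one, mul_one]
    have h1 : ‖(((deriv B (ξ+η) : ℝ) : ℂ) + Complex.I *
        (((2*π*((deriv θ η + iteratedDeriv 2 θ η * ξ - deriv θ (ξ+η)) * B (ξ+η))) : ℝ) : ℂ))‖
        ≤ ε₁ + 2*π*(ε₂/2*|ξ|^2*(B η + ε₁*|ξ|)) := by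
      refine le_trans (norm_add_le _ _) ?_
      rw [Complex.norm_real, Real.norm_eq_abs, norm_mul, Complex.norm_I, one_mul,
        Complex.norm_real, Real.norm_eq_abs]
      have ha : |deriv θ η + iteratedDeriv 2 θ η * ξ - deriv θ (ξ+η)| ≤ ε₂/2*|ξ|^2 := by
        have h := hτ ξ
        rw [show deriv θ η + iteratedDeriv 2 θ η * ξ - deriv θ (ξ+η)
          = -(deriv θ (ξ+η) - deriv θ η - iteratedDeriv 2 θ η * ξ) from by ring, abs_neg]
        exact h
      have hb : |2*π*((deriv θ η + iteratedDeriv 2 θ η * ξ - deriv θ (ξ+η)) * B (ξ+η))|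
          ≤ 2*π*(ε₂/2*|ξ|^2*(B η + ε₁*|ξ|)) := by
        rw [abs_mul, abs_of_pos (by positivity : (0:ℝ) < 2*π), abs_mul,
          abs_of_pos (hBpos (ξ+η))]
        refine mul_le_mul_of_nonneg_left ?_ (by positivity)
        exact mul_le_mul ha (hBle ξ) (hBpos _).le (by positivity)
      have := hB1 (ξ+η)
      linarith
    calc ‖(((deriv B (ξ+η) : ℝ) : ℂ) + Complex.I *
        (((2*π*((deriv θ η + iteratedDeriv 2 θ η * ξ - deriv θ (ξ+η)) * B (ξ+η))) : ℝ) : ℂ))‖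
        * ‖wm g m ξ‖
        ≤ (ε₁ + 2*π*(ε₂/2*|ξ|^2*(B η + ε₁*|ξ|))) * ‖wm g m ξ‖ :=
          mul_le_mul_of_nonneg_right h1 (norm_nonneg _)
      _ = ε₁ * ‖wm g m ξ‖ + ε₁*ε₂*π * ‖wm g (m+3) ξ‖ + ε₂*π*B η * ‖wm g (m+2) ξ‖ := by
          rw [norm_wm_add g m 2, norm_wm_add g m 3]
          ring
  rw [hQF]
  calc ‖∫ ξ : ℝ, F ξ‖ ≤ ∫ ξ : ℝ, ‖F ξ‖ := norm_integral_le_integral_norm F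
    _ ≤ ∫ ξ : ℝ, (ε₁ * ‖wm g m ξ‖ + ε₁*ε₂*π * ‖wm g (m+3) ξ‖ + ε₂*π*B η * ‖wm g (m+2) ξ‖) := by
        refine integral_mono hIF.norm ?_ hbound
        exact (((wInt m (by omega)).const_mul _).add
          ((wInt (m+3) (by omega)).const_mul _)).add ((wInt (m+2) (by omega)).const_mul _)
    _ = ε₁ * Imom g m + ε₁*ε₂*π * Imom g (m+3) + ε₂*π*B η * Imom g (m+2) := by
        have i1 : Integrable (fun ξ : ℝ => ε₁ * ‖wm g m ξ‖) :=
          (wInt m (by omega)).const_mul _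
        have i2 : Integrable (fun ξ : ℝ => ε₁*ε₂*π * ‖wm g (m+3) ξ‖) :=
          (wInt (m+3) (by omega)).const_mul _
        have i3 : Integrable (fun ξ : ℝ => ε₂*π*B η * ‖wm g (m+2) ξ‖) :=
          (wInt (m+2) (by omega)).const_mul _
        have i12 : Integrable (fun ξ : ℝ => ε₁ * ‖wm g m ξ‖ + ε₁*ε₂*π * ‖wm g (m+3) ξ‖) :=
          i1.add i2
        have e1 : (∫ ξ : ℝ, (ε₁ * ‖wm g m ξ‖ + ε₁*ε₂*π * ‖wm g (m+3) ξ‖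
              + ε₂*π*B η * ‖wm g (m+2) ξ‖))
            = (∫ ξ : ℝ, (ε₁ * ‖wm g m ξ‖ + ε₁*ε₂*π * ‖wm g (m+3) ξ‖))
              + ∫ ξ : ℝ, ε₂*π*B η * ‖wm g (m+2) ξ‖ := integral_add i12 i3
        have e2 : (∫ ξ : ℝ, (ε₁ * ‖wm g m ξ‖ + ε₁*ε₂*π * ‖wm g (m+3) ξ‖))
            = (∫ ξ : ℝ, ε₁ * ‖wm g m ξ‖) + ∫ ξ : ℝ, ε₁*ε₂*π * ‖wm g (m+3) ξ‖ :=
          integral_add i1 i2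
        rw [e1, e2, integral_const_mul, integral_const_mul, integral_const_mul]
        rfl
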